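/- arXiv:1508.03109 — 7 statements merged into one kernel-verified Lean document; each statement's English description precedes it below -/
import Mathlib

section
/- Let I be a subinterval of (0,∞), let f : I → (0,∞) be a geometrically convex function, and let a, b ∈ I with a < b and f(a) ≠ f(b). Then f(√(ab)) ≤ (1/(ln b − ln a)) ∫_a^b (1/t)·√(f(t)·f(ab/t)) dt ≤ (1/(ln b − ln a)) ∫_a^b f(t)/t dt ≤ (f(b) − f(a))/(ln f(b) − ln f(a)) ≤ (f(a) + f(b))/2. -/
/-!
Substituting `t = a ^ (1 - s) * b ^ s` turns `dt / t` into `(log b - log a) ds`, `√(a * b)` into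
`s = 1 / 2` and `a * b / t` into `1 - s`, and it turns geometric convexity of `f` into convexity of
`log ∘ φ` on `[0, 1]`, where `φ s = f (a ^ (1 - s) * b ^ s)`. The chain then reads
`φ (1/2) ≤ ∫ √(φ s * φ (1 - s)) ≤ ∫ φ ≤ ∫ φ 0 ^ (1 - s) * φ 1 ^ s ≤ ∫ ((1 - s) * φ 0 + s * φ 1)`:
log-convexity at the midpoint of `s` and `1 - s`, AM-GM together with the symmetry `s ↦ 1 - s`,
log-convexity against the chord, and weighted AM-GM. The last two integrals are the logarithmic
and the arithmetic mean of `f a` and `f b`.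
-/

open Real MeasureTheory Set

theorem IntervalIntegrable.of_continuousOn_Ioo_of_norm_le {F : ℝ → ℝ} {a b M : ℝ} (hab : a ≤ b)
    (hc : ContinuousOn F (Ioo a b)) (hM : ∀ x ∈ Ioo a b, ‖F x‖ ≤ M) :
    IntervalIntegrable F volume a b := by
  rw [intervalIntegrable_iff_integrableOn_Ioo_of_le hab]
  exact ⟨hc.aestronglyMeasurable measurableSet_Ioo, .restrict_of_bounded M measure_Ioo_lt_top
    ((ae_restrict_iff' measurableSet_Ioo).2 (ae_of_all _ hM))⟩

theorem Real.sqrt_mul_le_half_add {x y : ℝ} (hx : 0 ≤ x) (hy : 0 ≤ y) : √(x * y) ≤ (x + y) / 2 :=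
  sqrt_le_iff.2 ⟨by positivity, by nlinarith [sq_nonneg (x - y)]⟩

theorem integral_rpow_one_sub_mul_rpow {x y : ℝ} (hx : 0 < x) (hy : 0 < y) (hxy : x ≠ y) :
    ∫ s in (0 : ℝ)..1, x ^ (1 - s) * y ^ s = (y - x) / (log y - log x) := by
  have hc : log y - log x ≠ 0 := sub_ne_zero.2 fun h => hxy (log_injOn_pos hx hy h.symm)
  have hexp : ∀ s : ℝ, x ^ (1 - s) * y ^ s = exp (log x + (log y - log x) * s) := fun s => by
    rw [rpow_def_of_pos hx, rpow_def_of_pos hy, ← exp_add]; ring_nf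
  simp_rw [hexp]
  rw [intervalIntegral.integral_comp_add_mul exp hc, integral_exp, mul_zero, add_zero, mul_one,
    add_sub_cancel, exp_log hx, exp_log hy, smul_eq_mul, inv_mul_eq_div]

theorem div_log_sub_log_le_add_div_two {x y : ℝ} (hx : 0 < x) (hy : 0 < y) (hxy : x ≠ y) :
    (y - x) / (log y - log x) ≤ (x + y) / 2 := by
  rw [← integral_rpow_one_sub_mul_rpow hx hy hxy]
  calc ∫ s in (0 : ℝ)..1, x ^ (1 - s) * y ^ s ≤ ∫ s in (0 : ℝ)..1, ((1 - s) * x + s * y) := by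
        refine intervalIntegral.integral_mono_on zero_le_one
          (Continuous.intervalIntegrable (by fun_prop (disch := positivity)) _ _)
          (Continuous.intervalIntegrable (by fun_prop) _ _) fun s hs => ?_
        exact geom_mean_le_arith_mean2_weighted (by linarith [hs.2]) hs.1 hx.le hy.le (by ring)
    _ = (x + y) / 2 := by
        have hlin : ∀ s : ℝ, (1 - s) * x + s * y = x + (y - x) * s := fun s => by ring
        simp_rw [hlin]
        rw [intervalIntegral.integral_add intervalIntegrable_const
          (Continuous.intervalIntegrable (by fun_prop) _ _), intervalIntegral.integral_const_mul,
          integral_id]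
        simp
        ring

theorem le_rpow_mul_rpow_of_convexOn_log {E : Type*} [AddCommGroup E] [Module ℝ E] {S : Set E}
    {φ : E → ℝ} (hpos : ∀ x ∈ S, 0 < φ x) (hφ : ConvexOn ℝ S fun x => log (φ x))
    {x y : E} (hx : x ∈ S) (hy : y ∈ S) {p q : ℝ} (hp : 0 ≤ p) (hq : 0 ≤ q) (hpq : p + q = 1) :
    φ (p • x + q • y) ≤ φ x ^ p * φ y ^ q := by
  have hlog := hφ.2 hx hy hp hq hpq
  simp only [smul_eq_mul] at hlog
  rw [rpow_def_of_pos (hpos x hx), rpow_def_of_pos (hpos y hy), ← exp_add,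
    ← exp_log (hpos _ (hφ.1 hx hy hp hq hpq))]
  exact exp_le_exp.2 (by linarith)

section LogConvexOnUnitInterval

variable {φ : ℝ → ℝ} (hpos : ∀ s ∈ Icc (0 : ℝ) 1, 0 < φ s)
  (hφ : ConvexOn ℝ (Icc 0 1) fun s => log (φ s))
include hpos hφ

theorem le_rpow_one_sub_mul_rpow_of_convexOn_log {s : ℝ} (hs : s ∈ Icc (0 : ℝ) 1) :
    φ s ≤ φ 0 ^ (1 - s) * φ 1 ^ s := by
  simpa using le_rpow_mul_rpow_of_convexOn_log hpos hφ (left_mem_Icc.2 zero_le_one)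
    (right_mem_Icc.2 zero_le_one) (p := 1 - s) (q := s) (by linarith [hs.2]) hs.1 (by ring)

theorem le_add_of_convexOn_log {s : ℝ} (hs : s ∈ Icc (0 : ℝ) 1) : φ s ≤ φ 0 + φ 1 := by
  have h0 := hpos 0 (left_mem_Icc.2 zero_le_one)
  have h1 := hpos 1 (right_mem_Icc.2 zero_le_one)
  calc φ s ≤ φ 0 ^ (1 - s) * φ 1 ^ s := le_rpow_one_sub_mul_rpow_of_convexOn_log hpos hφ hs
    _ ≤ (1 - s) * φ 0 + s * φ 1 :=
        geom_mean_le_arith_mean2_weighted (by linarith [hs.2]) hs.1 h0.le h1.le (by ring)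
    _ ≤ φ 0 + φ 1 := by nlinarith [hs.1, hs.2]

theorem continuousOn_Ioo_of_convexOn_log : ContinuousOn φ (Ioo 0 1) := by
  have hcont := hφ.continuousOn_interior
  rw [interior_Icc] at hcont
  exact (continuous_exp.comp_continuousOn hcont).congr fun s hs =>
    (exp_log (hpos s (Ioo_subset_Icc_self hs))).symm

theorem intervalIntegrable_of_convexOn_log : IntervalIntegrable φ volume 0 1 :=
  .of_continuousOn_Ioo_of_norm_le zero_le_one (continuousOn_Ioo_of_convexOn_log hpos hφ)
    fun s hs => by
      rw [norm_of_nonneg (hpos s (Ioo_subset_Icc_self hs)).le]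
      exact le_add_of_convexOn_log hpos hφ (Ioo_subset_Icc_self hs)

theorem intervalIntegrable_sqrt_mul_comp_one_sub_of_convexOn_log :
    IntervalIntegrable (fun s => √(φ s * φ (1 - s))) volume 0 1 := by
  refine .of_continuousOn_Ioo_of_norm_le (M := φ 0 + φ 1) zero_le_one ?_ fun s hs => ?_
  · have hcont := continuousOn_Ioo_of_convexOn_log hpos hφ
    refine (hcont.mul (hcont.comp (by fun_prop) fun s hs => ?_)).sqrt
    exact ⟨by linarith [hs.2], by linarith [hs.1]⟩
  · have hs := Ioo_subset_Icc_self hs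
    rw [norm_of_nonneg (sqrt_nonneg _)]
    calc √(φ s * φ (1 - s)) ≤ (φ s + φ (1 - s)) / 2 :=
          sqrt_mul_le_half_add (hpos s hs).le (hpos _ (Icc.mem_iff_one_sub_mem.1 hs)).le
      _ ≤ φ 0 + φ 1 := by
          linarith [le_add_of_convexOn_log hpos hφ hs,
            le_add_of_convexOn_log hpos hφ (Icc.mem_iff_one_sub_mem.1 hs)]

theorem le_integral_sqrt_mul_comp_one_sub_of_convexOn_log :
    φ (1 / 2) ≤ ∫ s in (0 : ℝ)..1, √(φ s * φ (1 - s)) := by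
  have hmid : ∀ s ∈ Icc (0 : ℝ) 1, φ (1 / 2) ≤ √(φ s * φ (1 - s)) := fun s hs => by
    have hs' := Icc.mem_iff_one_sub_mem.1 hs
    have h := le_rpow_mul_rpow_of_convexOn_log hpos hφ hs hs' (p := 1 / 2) (q := 1 / 2)
      (by norm_num) (by norm_num) (by norm_num)
    rwa [smul_eq_mul, smul_eq_mul, show 1 / 2 * s + 1 / 2 * (1 - s) = 1 / 2 by ring,
      ← mul_rpow (hpos s hs).le (hpos _ hs').le, ← sqrt_eq_rpow] at h
  simpa using intervalIntegral.integral_mono_on zero_le_one intervalIntegrable_const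
    (intervalIntegrable_sqrt_mul_comp_one_sub_of_convexOn_log hpos hφ) hmid

theorem integral_sqrt_mul_comp_one_sub_le_integral_of_convexOn_log :
    ∫ s in (0 : ℝ)..1, √(φ s * φ (1 - s)) ≤ ∫ s in (0 : ℝ)..1, φ s := by
  have hint := intervalIntegrable_of_convexOn_log hpos hφ
  have hint' : IntervalIntegrable (fun s => φ (1 - s)) volume 0 1 := by
    simpa using (hint.comp_sub_left 1).symm
  calc ∫ s in (0 : ℝ)..1, √(φ s * φ (1 - s)) ≤ ∫ s in (0 : ℝ)..1, (φ s + φ (1 - s)) / 2 :=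
        intervalIntegral.integral_mono_on zero_le_one
          (intervalIntegrable_sqrt_mul_comp_one_sub_of_convexOn_log hpos hφ)
          ((hint.add hint').div_const 2) fun s hs =>
            sqrt_mul_le_half_add (hpos s hs).le (hpos _ (Icc.mem_iff_one_sub_mem.1 hs)).le
    _ = ∫ s in (0 : ℝ)..1, φ s := by
        rw [intervalIntegral.integral_div, intervalIntegral.integral_add hint hint',
          intervalIntegral.integral_comp_sub_left φ 1, sub_self, sub_zero]
        ring

theorem integral_le_div_log_sub_log_of_convexOn_log (h01 : φ 0 ≠ φ 1) :
    ∫ s in (0 : ℝ)..1, φ s ≤ (φ 1 - φ 0) / (log (φ 1) - log (φ 0)) := by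
  have h0 := hpos 0 (left_mem_Icc.2 zero_le_one)
  have h1 := hpos 1 (right_mem_Icc.2 zero_le_one)
  rw [← integral_rpow_one_sub_mul_rpow h0 h1 h01]
  exact intervalIntegral.integral_mono_on zero_le_one (intervalIntegrable_of_convexOn_log hpos hφ)
    (Continuous.intervalIntegrable (by fun_prop (disch := positivity)) _ _)
    fun s hs => le_rpow_one_sub_mul_rpow_of_convexOn_log hpos hφ hs

end LogConvexOnUnitInterval

noncomputable def geomPath (a b s : ℝ) : ℝ := a ^ (1 - s) * b ^ s

section GeomPath

variable {a b : ℝ}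

theorem geomPath_eq_exp (ha : 0 < a) (hb : 0 < b) (s : ℝ) :
    geomPath a b s = exp (log a + s * (log b - log a)) := by
  rw [geomPath, rpow_def_of_pos ha, rpow_def_of_pos hb, ← exp_add]; ring_nf

theorem geomPath_pos (ha : 0 < a) (hb : 0 < b) (s : ℝ) : 0 < geomPath a b s := by
  unfold geomPath; positivity

@[simp] theorem geomPath_zero : geomPath a b 0 = a := by simp [geomPath]

@[simp] theorem geomPath_one : geomPath a b 1 = b := by simp [geomPath]

theorem geomPath_one_half (ha : 0 < a) (hb : 0 < b) : geomPath a b (1 / 2) = √(a * b) := by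
  rw [geomPath, sqrt_eq_rpow, mul_rpow ha.le hb.le]; norm_num

theorem mul_div_geomPath (ha : 0 < a) (hb : 0 < b) (s : ℝ) :
    a * b / geomPath a b s = geomPath a b (1 - s) := by
  rw [geomPath_eq_exp ha hb, geomPath_eq_exp ha hb, div_eq_iff (exp_pos _).ne', ← exp_add,
    ← exp_log (mul_pos ha hb), log_mul ha.ne' hb.ne']
  ring_nf

theorem geomPath_rpow_mul_rpow (ha : 0 < a) (hb : 0 < b) (s t p q : ℝ) (hpq : p + q = 1) :
    geomPath a b s ^ p * geomPath a b t ^ q = geomPath a b (p * s + q * t) := by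
  simp only [geomPath_eq_exp ha hb, ← exp_mul, ← exp_add]
  congr 1
  linear_combination (log a) * hpq

theorem geomPath_mem_Icc (ha : 0 < a) (hb : 0 < b) (hab : a ≤ b) {s : ℝ} (hs : s ∈ Icc 0 1) :
    geomPath a b s ∈ Icc a b := by
  have hlog : 0 ≤ log b - log a := sub_nonneg.2 (log_le_log ha hab)
  rw [geomPath_eq_exp ha hb]
  constructor
  · calc a = exp (log a) := (exp_log ha).symm
      _ ≤ _ := exp_le_exp.2 (by nlinarith [hs.1])
  · calc _ ≤ exp (log b) := exp_le_exp.2 (by nlinarith [hs.2])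
      _ = b := exp_log hb

theorem integral_div_self_eq_mul_integral_geomPath (G : ℝ → ℝ) (ha : 0 < a) (hb : 0 < b)
    (hab : a ≤ b) :
    ∫ t in a..b, G t / t = (log b - log a) * ∫ s in (0 : ℝ)..1, G (geomPath a b s) := by
  have hlog : 0 ≤ log b - log a := sub_nonneg.2 (log_le_log ha hab)
  have hderiv : ∀ s, HasDerivAt (geomPath a b) (geomPath a b s * (log b - log a)) s := by
    intro s
    simp only [funext (geomPath_eq_exp ha hb)]
    simpa using ((hasDerivAt_id s).mul_const (log b - log a)).const_add (log a) |>.exp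
  have hsub := intervalIntegral.integral_comp_mul_deriv_of_deriv_nonneg (a := 0) (b := 1)
    (g := fun t => G t / t)
    (fun s _ => (hderiv s).continuousAt.continuousWithinAt) (fun s _ => hderiv s)
    (fun s _ => mul_nonneg (geomPath_pos ha hb s).le hlog)
  rw [geomPath_zero, geomPath_one] at hsub
  rw [← hsub, ← intervalIntegral.integral_const_mul]
  refine intervalIntegral.integral_congr fun s _ => ?_
  have := (geomPath_pos ha hb s).ne'
  simp only [Function.comp_apply]
  field_simp

end GeomPath

def GeomConvexOn (I : Set ℝ) (f : ℝ → ℝ) : Prop :=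
  ∀ a ∈ I, ∀ b ∈ I, ∀ l ∈ Icc (0 : ℝ) 1, f (a ^ l * b ^ (1 - l)) ≤ f a ^ l * f b ^ (1 - l)

theorem GeomConvexOn.convexOn_log_comp_geomPath {I : Set ℝ} {f : ℝ → ℝ} (hf : GeomConvexOn I f)
    (hpos : ∀ x ∈ I, 0 < f x) {a b : ℝ} (ha : 0 < a) (hb : 0 < b)
    (hpath : MapsTo (geomPath a b) (Icc 0 1) I) :
    ConvexOn ℝ (Icc 0 1) fun s => log (f (geomPath a b s)) := by
  refine ⟨convex_Icc 0 1, fun s hs t ht p q hp hq hpq => ?_⟩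
  have hmem := hpath (convex_Icc 0 1 hs ht hp hq hpq)
  obtain rfl : q = 1 - p := by linarith
  have h := hf _ (hpath hs) _ (hpath ht) p ⟨hp, by linarith⟩
  rw [geomPath_rpow_mul_rpow ha hb s t p (1 - p) (by ring)] at h
  have hfs := hpos _ (hpath hs)
  have hft := hpos _ (hpath ht)
  calc log (f (geomPath a b (p • s + (1 - p) • t)))
      ≤ log (f (geomPath a b s) ^ p * f (geomPath a b t) ^ (1 - p)) := log_le_log (hpos _ hmem) h
    _ = p • log (f (geomPath a b s)) + (1 - p) • log (f (geomPath a b t)) := by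
        rw [log_mul (by positivity) (by positivity), log_rpow hfs, log_rpow hft, smul_eq_mul,
          smul_eq_mul]

/-- **Hermite–Hadamard type inequality for geometrically convex functions.**
If `f : I → (0,∞)` is geometrically convex on a subinterval `I` of `(0,∞)`,
`a, b ∈ I` with `a < b` and `f a ≠ f b`, then
`f (√(ab)) ≤ (1/(ln b − ln a)) ∫_a^b (1/t)√(f t · f(ab/t)) dt
  ≤ (1/(ln b − ln a)) ∫_a^b f t / t dt
  ≤ (f b − f a)/(ln f b − ln f a) ≤ (f a + f b)/2`. -/
theorem stmt_0 (I : Set ℝ) (hI : I ⊆ Set.Ioi (0 : ℝ)) (hI' : I.OrdConnected)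
    (f : ℝ → ℝ) (hfpos : ∀ x ∈ I, 0 < f x)
    (hgc : ∀ a ∈ I, ∀ b ∈ I, ∀ l ∈ Set.Icc (0 : ℝ) 1,
      f (a ^ l * b ^ (1 - l)) ≤ f a ^ l * f b ^ (1 - l))
    (a b : ℝ) (ha : a ∈ I) (hb : b ∈ I) (hab : a < b) (hfab : f a ≠ f b) :
    f (Real.sqrt (a * b)) ≤
      (1 / (Real.log b - Real.log a)) *
        ∫ t in a..b, (1 / t) * Real.sqrt (f t * f (a * b / t)) ∧
    (1 / (Real.log b - Real.log a)) *
        (∫ t in a..b, (1 / t) * Real.sqrt (f t * f (a * b / t))) ≤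
      (1 / (Real.log b - Real.log a)) * ∫ t in a..b, f t / t ∧
    (1 / (Real.log b - Real.log a)) * (∫ t in a..b, f t / t) ≤
      (f b - f a) / (Real.log (f b) - Real.log (f a)) ∧
    (f b - f a) / (Real.log (f b) - Real.log (f a)) ≤ (f a + f b) / 2 := by
  have ha0 : 0 < a := hI ha
  have hb0 : 0 < b := hI hb
  have hpath : MapsTo (geomPath a b) (Icc 0 1) I := fun s hs =>
    hI'.out ha hb (geomPath_mem_Icc ha0 hb0 hab.le hs)
  have hφpos : ∀ s ∈ Icc (0 : ℝ) 1, 0 < f (geomPath a b s) := fun s hs => hfpos _ (hpath hs)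
  have hφ := GeomConvexOn.convexOn_log_comp_geomPath hgc hfpos ha0 hb0 hpath
  have hmean : ∀ G : ℝ → ℝ, 1 / (log b - log a) * ∫ t in a..b, G t / t =
      ∫ s in (0 : ℝ)..1, G (geomPath a b s) := fun G => by
    rw [integral_div_self_eq_mul_integral_geomPath G ha0 hb0 hab.le, one_div,
      inv_mul_cancel_left₀ (sub_pos.2 (log_lt_log ha0 hab)).ne']
  simp_rw [one_div_mul_eq_div _ √(_)]
  rw [hmean, hmean]
  simp_rw [mul_div_geomPath ha0 hb0]
  rw [← geomPath_one_half ha0 hb0]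
  have hfa : f (geomPath a b 0) = f a := by rw [geomPath_zero]
  have hfb : f (geomPath a b 1) = f b := by rw [geomPath_one]
  rw [← hfa, ← hfb] at hfab ⊢
  exact ⟨le_integral_sqrt_mul_comp_one_sub_of_convexOn_log hφpos hφ,
    integral_sqrt_mul_comp_one_sub_le_integral_of_convexOn_log hφpos hφ,
    integral_le_div_log_sub_log_of_convexOn_log hφpos hφ hfab,
    div_log_sub_log_le_add_div_two (hφpos 0 (left_mem_Icc.2 zero_le_one))
      (hφpos 1 (right_mem_Icc.2 zero_le_one)) hfab⟩
end

section
/- Let I be a subinterval of (0,∞), let f : I → (0,∞) be a geometrically convex function, and let a, b ∈ I. Then for every λ ∈ [0,1], f(√(ab)) ≤ √(f(a^λ b^(1−λ)) · f(a^(1−λ) b^λ)) ≤ √(f(a) · f(b)). -/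
lemma wm_mem_aux (I : Set ℝ) (hI : I ⊆ Set.Ioi (0 : ℝ)) (hI' : I.OrdConnected)
    (a b : ℝ) (ha : a ∈ I) (hb : b ∈ I) (l : ℝ) (hl0 : 0 ≤ l) (hl1 : l ≤ 1) :
    a ^ l * b ^ (1 - l) ∈ I := by
  have hap : 0 < a := hI ha
  have hbp : 0 < b := hI hb
  set m := min a b with hm
  set M := max a b with hM
  have hmI : m ∈ I := by rcases le_total a b with h | h
                         · simpa [hm, min_eq_left h] using ha
                         · simpa [hm, min_eq_right h] using hb
  have hMI : M ∈ I := by rcases le_total a b with h | h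
                         · simpa [hM, max_eq_right h] using hb
                         · simpa [hM, max_eq_left h] using ha
  have hmp : 0 < m := lt_min hap hbp
  have hMp : 0 < M := lt_of_lt_of_le hmp (min_le_max)
  have hmeq : m ^ l * m ^ (1 - l) = m := by
    rw [← Real.rpow_add hmp]; norm_num
  have hMeq : M ^ l * M ^ (1 - l) = M := by
    rw [← Real.rpow_add hMp]; norm_num
  have hlow : m ≤ a ^ l * b ^ (1 - l) := by
    rw [← hmeq]
    exact mul_le_mul (Real.rpow_le_rpow hmp.le (min_le_left a b) hl0)
      (Real.rpow_le_rpow hmp.le (min_le_right a b) (by linarith))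
      (Real.rpow_nonneg hmp.le _) (Real.rpow_nonneg hap.le _)
  have hhigh : a ^ l * b ^ (1 - l) ≤ M := by
    rw [← hMeq]
    exact mul_le_mul (Real.rpow_le_rpow hap.le (le_max_left a b) hl0)
      (Real.rpow_le_rpow hbp.le (le_max_right a b) (by linarith))
      (Real.rpow_nonneg hbp.le _) (Real.rpow_nonneg hMp.le _)
  exact hI'.out hmI hMI ⟨hlow, hhigh⟩

/-- If `f : I → (0,∞)` is geometrically convex on a subinterval `I` of `(0,∞)` and
`a, b ∈ I`, then for every `λ ∈ [0,1]`,
`f(√(ab)) ≤ √(f(a^λ b^(1−λ)) · f(a^(1−λ) b^λ)) ≤ √(f(a) · f(b))`. -/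
theorem stmt_1 (I : Set ℝ) (hI : I ⊆ Set.Ioi (0 : ℝ)) (hI' : I.OrdConnected)
    (f : ℝ → ℝ) (hfpos : ∀ x ∈ I, 0 < f x)
    (hgc : ∀ a ∈ I, ∀ b ∈ I, ∀ l ∈ Set.Icc (0 : ℝ) 1,
      f (a ^ l * b ^ (1 - l)) ≤ f a ^ l * f b ^ (1 - l))
    (a b : ℝ) (ha : a ∈ I) (hb : b ∈ I) (l : ℝ) (hl : l ∈ Set.Icc (0 : ℝ) 1) :
    f (Real.sqrt (a * b)) ≤
      Real.sqrt (f (a ^ l * b ^ (1 - l)) * f (a ^ (1 - l) * b ^ l)) ∧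
    Real.sqrt (f (a ^ l * b ^ (1 - l)) * f (a ^ (1 - l) * b ^ l)) ≤
      Real.sqrt (f a * f b) := by
  obtain ⟨hl0, hl1⟩ := hl
  have hap : 0 < a := hI ha
  have hbp : 0 < b := hI hb
  set u := a ^ l * b ^ (1 - l) with hu
  set v := a ^ (1 - l) * b ^ l with hv
  have huI : u ∈ I := wm_mem_aux I hI hI' a b ha hb l hl0 hl1
  have hvI : v ∈ I := by
    have := wm_mem_aux I hI hI' a b ha hb (1 - l) (by linarith) (by linarith)
    simpa [hv] using this
  have hup : 0 < u := hI huI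
  have hvp : 0 < v := hI hvI
  have huv : u * v = a * b := by
    rw [hu, hv, show a ^ l * b ^ (1 - l) * (a ^ (1 - l) * b ^ l)
        = (a ^ l * a ^ (1 - l)) * (b ^ (1 - l) * b ^ l) by ring,
      ← Real.rpow_add hap, ← Real.rpow_add hbp]
    norm_num
  constructor
  · have h1 : f (u ^ (2⁻¹ : ℝ) * v ^ (1 - 2⁻¹ : ℝ)) ≤ f u ^ (2⁻¹ : ℝ) * f v ^ (1 - 2⁻¹ : ℝ) :=
      hgc u huI v hvI 2⁻¹ ⟨by norm_num, by norm_num⟩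
    have hsq : Real.sqrt (a * b) = u ^ (2⁻¹ : ℝ) * v ^ (1 - 2⁻¹ : ℝ) := by
      rw [← huv, show (1 - 2⁻¹ : ℝ) = 2⁻¹ by norm_num, ← Real.mul_rpow hup.le hvp.le,
        Real.sqrt_eq_rpow]
      norm_num
    have hsq2 : Real.sqrt (f u * f v) = f u ^ (2⁻¹ : ℝ) * f v ^ (1 - 2⁻¹ : ℝ) := by
      rw [show (1 - 2⁻¹ : ℝ) = 2⁻¹ by norm_num,
        ← Real.mul_rpow (hfpos u huI).le (hfpos v hvI).le, Real.sqrt_eq_rpow]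
      norm_num
    rw [hsq, hsq2]
    exact h1
  · apply Real.sqrt_le_sqrt
    have h2 : f u ≤ f a ^ l * f b ^ (1 - l) := hgc a ha b hb l ⟨hl0, hl1⟩
    have h3 : f v ≤ f a ^ (1 - l) * f b ^ l := by
      have := hgc a ha b hb (1 - l) ⟨by linarith, by linarith⟩
      simpa [hv] using this
    calc f u * f v ≤ (f a ^ l * f b ^ (1 - l)) * (f a ^ (1 - l) * f b ^ l) :=
          mul_le_mul h2 h3 (hfpos v hvI).le
            (mul_nonneg (Real.rpow_nonneg (hfpos a ha).le _) (Real.rpow_nonneg (hfpos b hb).le _))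
      _ = (f a ^ l * f a ^ (1 - l)) * (f b ^ (1 - l) * f b ^ l) := by ring
      _ = f a * f b := by
          rw [← Real.rpow_add (hfpos a ha), ← Real.rpow_add (hfpos b hb)]; norm_num
end

section
/- Let I be a subinterval of (0,∞), let f : I → (0,∞) be a geometrically convex function, and let a, b ∈ I with a < b. Then f(√(ab)) ≤ (1/(ln b − ln a)) ∫_a^b (1/t)·√(f(t)·f(ab/t)) dt ≤ √(f(a) · f(b)). -/
/-!
Both inequalities hold pointwise for the integrand, and `dt / t` has total mass `ln b − ln a`
on `[a, b]`. Since `t · (ab/t) = ab`, the lower bound is geometric convexity at the geometric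
midpoint. For the upper bound write `t = a^λ b^(1−λ)`, so that `ab/t = b^λ a^(1−λ)`; geometric
convexity at both points gives `f t · f (ab/t) ≤ f a · f b`. Integrability comes from
continuity: `log ∘ f ∘ exp` is convex, hence continuous on the interior.
-/

open Real Set MeasureTheory intervalIntegral

def GeometricallyConvexOn (I : Set ℝ) (f : ℝ → ℝ) : Prop :=
  ∀ a ∈ I, ∀ b ∈ I, ∀ l ∈ Icc (0 : ℝ) 1, f (a ^ l * b ^ (1 - l)) ≤ f a ^ l * f b ^ (1 - l)

theorem rpow_mul_rpow_one_sub {x : ℝ} (hx : 0 < x) (l : ℝ) : x ^ l * x ^ (1 - l) = x := by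
  rw [← rpow_add hx, add_sub_cancel, rpow_one]

theorem exists_rpow_mul_rpow_eq_of_mem_Icc {a b t : ℝ} (ha : 0 < a) (hab : a ≤ b)
    (ht : t ∈ Icc a b) : ∃ l ∈ Icc (0 : ℝ) 1, a ^ l * b ^ (1 - l) = t := by
  have ht0 : 0 < t := ha.trans_le ht.1
  have hlog : log t ∈ segment ℝ (log a) (log b) := by
    rw [segment_eq_Icc (log_le_log ha hab)]
    exact ⟨log_le_log ha ht.1, log_le_log ht0 ht.2⟩
  obtain ⟨p, q, hp, hq, hpq, hpt⟩ := hlog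
  obtain rfl : q = 1 - p := by linarith
  refine ⟨p, ⟨hp, by linarith⟩, ?_⟩
  rw [← exp_log ht0, ← hpt, rpow_def_of_pos ha, rpow_def_of_pos (ha.trans_le hab), ← exp_add,
    smul_eq_mul, smul_eq_mul, mul_comm p, mul_comm (1 - p)]

theorem mul_div_mem_Icc {a b t : ℝ} (ha : 0 < a) (ht : t ∈ Icc a b) : a * b / t ∈ Icc a b := by
  have ht0 : 0 < t := ha.trans_le ht.1
  rw [mem_Icc, le_div_iff₀ ht0, div_le_iff₀ ht0]
  constructor <;> nlinarith [ht.1, ht.2]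

theorem mul_div_mem_Ioo {a b t : ℝ} (ha : 0 < a) (ht : t ∈ Ioo a b) : a * b / t ∈ Ioo a b := by
  have ht0 : 0 < t := ha.trans ht.1
  rw [mem_Ioo, lt_div_iff₀ ht0, div_lt_iff₀ ht0]
  constructor <;> nlinarith [ht.1, ht.2]

theorem intervalIntegrable_of_continuousOn_Ioo_of_norm_le {F : ℝ → ℝ} {a b C : ℝ} (hab : a ≤ b)
    (hF : ContinuousOn F (Ioo a b)) (hC : ∀ t ∈ Ioo a b, ‖F t‖ ≤ C) :
    IntervalIntegrable F volume a b := by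
  rw [intervalIntegrable_iff_integrableOn_Ioo_of_le hab]
  exact .of_bound measure_Ioo_lt_top (hF.aestronglyMeasurable measurableSet_Ioo) C
    (ae_restrict_of_forall_mem measurableSet_Ioo hC)

theorem one_div_log_sub_mul_integral_mem_Icc {G : ℝ → ℝ} {a b m M : ℝ} (ha : 0 < a) (hab : a < b)
    (hG : IntervalIntegrable G volume a b) (hm : ∀ t ∈ Icc a b, m ≤ G t)
    (hM : ∀ t ∈ Icc a b, G t ≤ M) :
    (1 / (log b - log a)) * ∫ t in a..b, 1 / t * G t ∈ Icc m M := by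
  have hb : 0 < b := ha.trans hab
  have hL : 0 < log b - log a := sub_pos.2 (log_lt_log ha hab)
  have hinv : ContinuousOn (fun t : ℝ => 1 / t) (uIcc a b) :=
    continuousOn_const.div continuousOn_id fun t ht =>
      (ha.trans_le (uIcc_of_le hab.le ▸ ht).1).ne'
  have hweight (c : ℝ) : ∫ t in a..b, 1 / t * c = c * (log b - log a) := by
    rw [intervalIntegral.integral_mul_const, integral_one_div_of_pos ha hb, log_div hb.ne' ha.ne', mul_comm]
  have hint : IntervalIntegrable (fun t => 1 / t * G t) volume a b := hG.continuousOn_mul hinv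
  have hconst (c : ℝ) : IntervalIntegrable (fun t : ℝ => 1 / t * c) volume a b :=
    intervalIntegrable_const.continuousOn_mul hinv
  have hpos : ∀ t ∈ Icc a b, 0 ≤ 1 / t := fun t ht => one_div_nonneg.2 (ha.le.trans ht.1)
  rw [one_div_mul_eq_div, mem_Icc, le_div_iff₀ hL, div_le_iff₀ hL, ← hweight m, ← hweight M]
  exact ⟨integral_mono_on hab.le (hconst m) hint fun t ht =>
      mul_le_mul_of_nonneg_left (hm t ht) (hpos t ht),
    integral_mono_on hab.le hint (hconst M) fun t ht =>
      mul_le_mul_of_nonneg_left (hM t ht) (hpos t ht)⟩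

namespace GeometricallyConvexOn

variable {I : Set ℝ} {f : ℝ → ℝ}

theorem le_sqrt_mul (hf : GeometricallyConvexOn I f) {x y : ℝ} (hx : x ∈ I) (hy : y ∈ I)
    (hx0 : 0 ≤ x) (hy0 : 0 ≤ y) (hfx : 0 ≤ f x) (hfy : 0 ≤ f y) :
    f √(x * y) ≤ √(f x * f y) := by
  have h := hf x hx y hy (1 / 2) ⟨by norm_num, by norm_num⟩
  rwa [show (1 : ℝ) - 1 / 2 = 1 / 2 by norm_num, ← mul_rpow hx0 hy0, ← mul_rpow hfx hfy,
    ← sqrt_eq_rpow, ← sqrt_eq_rpow] at h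

theorem mul_le_of_mem_Icc (hf : GeometricallyConvexOn I f) {a b t : ℝ} (ha : a ∈ I) (hb : b ∈ I)
    (ha0 : 0 < a) (hab : a ≤ b) (hfa : 0 < f a) (hfb : 0 < f b) (ht : t ∈ Icc a b)
    (hft : 0 ≤ f t) : f t * f (a * b / t) ≤ f a * f b := by
  have hb0 : 0 < b := ha0.trans_le hab
  obtain ⟨l, hl, rfl⟩ := exists_rpow_mul_rpow_eq_of_mem_Icc ha0 hab ht
  have hreflect : a * b / (a ^ l * b ^ (1 - l)) = b ^ l * a ^ (1 - l) := by
    rw [div_eq_iff (by positivity)]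
    calc a * b = (a ^ l * a ^ (1 - l)) * (b ^ l * b ^ (1 - l)) := by
          rw [rpow_mul_rpow_one_sub ha0, rpow_mul_rpow_one_sub hb0]
      _ = b ^ l * a ^ (1 - l) * (a ^ l * b ^ (1 - l)) := by ring
  rw [hreflect]
  calc f (a ^ l * b ^ (1 - l)) * f (b ^ l * a ^ (1 - l))
      ≤ (f a ^ l * f b ^ (1 - l)) * (f b ^ l * f a ^ (1 - l)) :=
        mul_le_mul_of_nonneg (hf a ha b hb l hl) (hf b hb a ha l hl) hft (by positivity)
    _ = (f a ^ l * f a ^ (1 - l)) * (f b ^ l * f b ^ (1 - l)) := by ring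
    _ = f a * f b := by rw [rpow_mul_rpow_one_sub hfa, rpow_mul_rpow_one_sub hfb]

theorem convexOn_log_comp_exp (hf : GeometricallyConvexOn I f) (hI : I.OrdConnected)
    (hpos : ∀ x ∈ I, 0 < f x) : ConvexOn ℝ (exp ⁻¹' I) fun x => log (f (exp x)) := by
  have hconv : Convex ℝ (exp ⁻¹' I) := (hI.preimage_mono exp_monotone).convex
  refine ⟨hconv, fun x hx y hy p q hp hq hpq => ?_⟩
  have hmem := hconv hx hy hp hq hpq
  obtain rfl : q = 1 - p := by linarith
  have hexp : exp (p • x + (1 - p) • y) = exp x ^ p * exp y ^ (1 - p) := by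
    rw [smul_eq_mul, smul_eq_mul, exp_add, mul_comm p, mul_comm (1 - p), exp_mul, exp_mul]
  have hfx := hpos _ hx
  have hfy := hpos _ hy
  calc log (f (exp (p • x + (1 - p) • y)))
      ≤ log (f (exp x) ^ p * f (exp y) ^ (1 - p)) :=
        log_le_log (hpos _ hmem) (hexp ▸ hf _ hx _ hy p ⟨hp, by linarith⟩)
    _ = p • log (f (exp x)) + (1 - p) • log (f (exp y)) := by
        rw [log_mul (by positivity) (by positivity), log_rpow hfx, log_rpow hfy, smul_eq_mul,
          smul_eq_mul]

theorem continuousOn_interior (hf : GeometricallyConvexOn I f) (hI : I.OrdConnected)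
    (hI0 : I ⊆ Ioi 0) (hpos : ∀ x ∈ I, 0 < f x) : ContinuousOn f (interior I) := by
  have hg := (hf.convexOn_log_comp_exp hI hpos).continuousOn_interior
  have hlog : MapsTo log (interior I) (interior (exp ⁻¹' I)) := fun t ht =>
    preimage_interior_subset_interior_preimage continuous_exp
      (by rwa [mem_preimage, exp_log (hI0 (interior_subset ht))])
  refine (continuous_exp.comp_continuousOn (hg.comp (continuousOn_log.mono fun t ht =>
    (hI0 (interior_subset ht)).ne') hlog)).congr fun t ht => ?_
  simp only [Function.comp_apply, exp_log (hI0 (interior_subset ht)),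
    exp_log (hpos t (interior_subset ht))]

end GeometricallyConvexOn

/-- If `f : I → (0,∞)` is geometrically convex on a subinterval `I` of `(0,∞)` and
`a, b ∈ I` with `a < b`, then
`f(√(ab)) ≤ (1/(ln b − ln a)) ∫_a^b (1/t)√(f t · f(ab/t)) dt ≤ √(f(a) · f(b))`. -/
theorem stmt_2 (I : Set ℝ) (hI : I ⊆ Set.Ioi (0 : ℝ)) (hI' : I.OrdConnected)
    (f : ℝ → ℝ) (hfpos : ∀ x ∈ I, 0 < f x)
    (hgc : ∀ a ∈ I, ∀ b ∈ I, ∀ l ∈ Set.Icc (0 : ℝ) 1,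
      f (a ^ l * b ^ (1 - l)) ≤ f a ^ l * f b ^ (1 - l))
    (a b : ℝ) (ha : a ∈ I) (hb : b ∈ I) (hab : a < b) :
    f (Real.sqrt (a * b)) ≤
      (1 / (Real.log b - Real.log a)) *
        ∫ t in a..b, (1 / t) * Real.sqrt (f t * f (a * b / t)) ∧
    (1 / (Real.log b - Real.log a)) *
        (∫ t in a..b, (1 / t) * Real.sqrt (f t * f (a * b / t))) ≤
      Real.sqrt (f a * f b) := by
  have hf : GeometricallyConvexOn I f := hgc
  have ha0 : 0 < a := hI ha
  have hIcc : Icc a b ⊆ I := hI'.out ha hb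
  have hupper : ∀ t ∈ Icc a b, √(f t * f (a * b / t)) ≤ √(f a * f b) := fun t ht =>
    sqrt_le_sqrt (hf.mul_le_of_mem_Icc ha hb ha0 hab.le (hfpos a ha) (hfpos b hb) ht
      (hfpos t (hIcc ht)).le)
  have hlower : ∀ t ∈ Icc a b, f √(a * b) ≤ √(f t * f (a * b / t)) := fun t ht => by
    have ht0 : 0 < t := ha0.trans_le ht.1
    have hu := mul_div_mem_Icc ha0 ht
    have h := hf.le_sqrt_mul (hIcc ht) (hIcc hu) ht0.le (ha0.le.trans hu.1)
      (hfpos t (hIcc ht)).le (hfpos _ (hIcc hu)).le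
    rwa [mul_div_cancel₀ _ ht0.ne'] at h
  have hcont : ContinuousOn f (Ioo a b) := (hf.continuousOn_interior hI' hI hfpos).mono
    (interior_Icc.symm.subset.trans (interior_mono hIcc))
  have hint : IntervalIntegrable (fun t => √(f t * f (a * b / t))) volume a b :=
    intervalIntegrable_of_continuousOn_Ioo_of_norm_le hab.le
      (hcont.mul (hcont.comp (continuousOn_const.div continuousOn_id fun t ht =>
        (ha0.trans ht.1).ne') fun t => mul_div_mem_Ioo ha0)).sqrt fun t ht => by
      rw [norm_of_nonneg (sqrt_nonneg _)]
      exact hupper t (Ioo_subset_Icc_self ht)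
  exact one_div_log_sub_mul_integral_mem_Icc ha0 hab hint hlower hupper
end

section
/- Let H be a complex Hilbert space and let A, B be positive invertible bounded linear operators on H with AB = BA. Then for every ν ∈ [0,1], A^(1−ν) B^ν ≤ (1−ν)·A + ν·B in the operator order, where the real powers are defined via the continuous functional calculus. -/
/-!
Put `t = a⁻¹ b`; it is positive and commutes with `a`, and `a * t = b`. The scalar weighted
AM–GM inequality `x ^ ν ≤ (1 - ν) + ν x` on the spectrum of `t` gives `t ^ ν ≤ (1 - ν) + ν t`,
and multiplying by the commuting positive `a` preserves this, giving `a t ^ ν ≤ (1 - ν) a + ν b`.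
Finally `a t ^ ν = a ^ (1 - ν) b ^ ν` because real powers of commuting strictly positive
elements are multiplicative, which follows from `x ^ ν = exp (ν log x)` and
`log (x y) = log x + log y`.
-/

namespace CFC

open NormedSpace

variable {A : Type*} [CStarAlgebra A] [PartialOrder A] [StarOrderedRing A]

lemma exp_smul_log {a : A} (ha : IsStrictlyPositive a) (y : ℝ) :
    exp (y • log a) = a ^ y := by
  have hpos : ∀ x ∈ spectrum ℝ a, 0 < x := fun x hx => ha.spectrum_pos hx
  have hlog : ContinuousOn Real.log (spectrum ℝ a) :=
    Real.continuousOn_log.mono fun x hx => (hpos x hx).ne'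
  rw [log, ← cfc_const_mul y Real.log a, ← real_exp_eq_normedSpace_exp,
    ← cfc_comp' Real.exp (fun x => y * Real.log x) a (by fun_prop) (continuousOn_const.mul hlog),
    rpow_eq_cfc_real ha.nonneg]
  refine cfc_congr fun x hx => ?_
  rw [Real.rpow_def_of_pos (hpos x hx), mul_comm]

lemma log_mul_of_commute {a b : A} (ha : IsStrictlyPositive a) (hb : IsStrictlyPositive b)
    (hab : Commute a b) : log (a * b) = log a + log b := by
  let +nondep : NormedAlgebra ℚ A := .restrictScalars ℚ ℂ A
  have hlog : Commute (log a) (log b) := ((hab.cfc_real Real.log).symm.cfc_real Real.log).symm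
  rw [← log_exp (log a + log b), exp_add_of_commute hlog, exp_log a, exp_log b]

lemma mul_rpow_of_commute {a b : A} (ha : IsStrictlyPositive a) (hb : IsStrictlyPositive b)
    (hab : Commute a b) (y : ℝ) : (a * b) ^ y = a ^ y * b ^ y := by
  let +nondep : NormedAlgebra ℚ A := .restrictScalars ℚ ℂ A
  have hlog : Commute (y • log a) (y • log b) :=
    (((hab.cfc_real Real.log).symm.cfc_real Real.log).symm.smul_left y).smul_right y
  have hab_pos : IsStrictlyPositive (a * b) :=
    (ha.isUnit.mul hb.isUnit).isStrictlyPositive (hab.mul_nonneg ha.nonneg hb.nonneg)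
  rw [← exp_smul_log hab_pos, log_mul_of_commute ha hb hab, smul_add,
    exp_add_of_commute hlog, exp_smul_log ha, exp_smul_log hb]

lemma rpow_le_one_sub_smul_one_add_smul {a : A} (ha : 0 ≤ a) {ν : ℝ} (hν : ν ∈ Set.Icc (0 : ℝ) 1) :
    a ^ ν ≤ (1 - ν) • 1 + ν • a := by
  have haff : (1 - ν) • 1 + ν • a = cfc (fun x : ℝ => (1 - ν) + ν * x) a := by
    rw [cfc_add .., cfc_const .., cfc_const_mul_id .., Algebra.algebraMap_eq_smul_one]
  rw [rpow_eq_cfc_real ha, haff, cfc_le_iff _ _ a ((Real.continuous_rpow_const hν.1).continuousOn)]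
  intro x hx
  simpa using Real.geom_mean_le_arith_mean2_weighted (w₁ := 1 - ν) (w₂ := ν) (p₁ := 1) (p₂ := x)
    (by linarith [hν.2]) hν.1 zero_le_one (spectrum_nonneg_of_nonneg ha hx) (by ring)

lemma mul_le_mul_left_of_commute {a x y : A} (ha : 0 ≤ a) (hxy : x ≤ y) (hx : Commute a x)
    (hy : Commute a y) : a * x ≤ a * y := by
  rw [← sub_nonneg, ← mul_sub]
  exact (hy.sub_right hx).mul_nonneg ha (sub_nonneg.mpr hxy)

lemma rpow_one_sub_mul_rpow_le {a b : A} (ha : IsStrictlyPositive a) (hb : IsStrictlyPositive b)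
    (hab : Commute a b) {ν : ℝ} (hν : ν ∈ Set.Icc (0 : ℝ) 1) :
    a ^ (1 - ν) * b ^ ν ≤ (1 - ν) • a + ν • b := by
  set t := a ^ (-1 : ℝ) * b
  have hinv_b : Commute (a ^ (-1 : ℝ)) b := hab.cfc_nnreal _
  have hinv_pos : IsStrictlyPositive (a ^ (-1 : ℝ)) := .rpow a (-1) ha
  have ha_t : Commute a t := ((Commute.refl a).cfc_nnreal _).symm.mul_right hab
  have hat : a * t = b := by
    nth_rw 1 [← rpow_one a ha.nonneg]
    rw [← mul_assoc, rpow_mul_rpow_neg 1 ha, one_mul]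
  have hlhs : a ^ (1 - ν) * b ^ ν = a * t ^ ν := by
    rw [mul_rpow_of_commute hinv_pos hb hinv_b, rpow_rpow a _ _ (by norm_num) ha, ← mul_assoc]
    nth_rw 2 [← rpow_one a ha.nonneg]
    rw [← rpow_add ha.isUnit, sub_eq_add_neg, neg_one_mul]
  have hrhs : a * ((1 - ν) • 1 + ν • t) = (1 - ν) • a + ν • b := by
    rw [mul_add, mul_smul_comm, mul_one, mul_smul_comm, hat]
  have hyoung : t ^ ν ≤ (1 - ν) • 1 + ν • t :=
    rpow_le_one_sub_smul_one_add_smul (hinv_b.mul_nonneg hinv_pos.nonneg hb.nonneg) hν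
  rw [hlhs, ← hrhs]
  exact mul_le_mul_left_of_commute ha.nonneg hyoung (ha_t.symm.cfc_nnreal _).symm
    (((Commute.one_right a).smul_right _).add_right (ha_t.smul_right _))

end CFC

/-- Arithmetic–geometric mean inequality for commuting positive invertible operators:
`A^(1−ν) B^ν ≤ (1−ν)A + νB` for `ν ∈ [0,1]`. Real powers are via the continuous
functional calculus (`CFC.rpow`, written `A ^ ν`). -/
theorem stmt_7 {H : Type*} [NormedAddCommGroup H] [InnerProductSpace ℂ H]
    [CompleteSpace H] (A B : H →L[ℂ] H) (hA : 0 ≤ A) (hB : 0 ≤ B)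
    (hAu : IsUnit A) (hBu : IsUnit B) (hAB : A * B = B * A)
    (ν : ℝ) (hν : ν ∈ Set.Icc (0 : ℝ) 1) :
    A ^ (1 - ν) * B ^ ν ≤ (1 - ν) • A + ν • B :=
  CFC.rpow_one_sub_mul_rpow_le (hAu.isStrictlyPositive hA) (hBu.isStrictlyPositive hB) hAB hν
end

section
/- Let H be a complex Hilbert space and let A, B be positive invertible bounded linear operators on H with AB = BA. Then √(AB) ≤ ∫_0^1 A^t B^(1−t) dt ≤ (A + B)/2 in the operator order, where the integral is the Bochner integral of the operator-valued function t ↦ A^t B^(1−t) on [0,1] and the square root and real powers are defined via the continuous functional calculus. -/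
/-!
With `D = log A - log B`, which commutes with `B`, one has `A ^ t * B ^ (1 - t) = exp (t D) * B`.
Hence all three operators are of the form `f(D) * B`, with `f x` equal to `exp (x / 2)`,
`∫₀¹ exp (t x) dt` and `(1 + exp x) / 2` respectively. These are the two Hermite–Hadamard
inequalities for the convex function `t ↦ exp (t x)` on `[0, 1]`, and multiplying by the positive
operator `B`, which commutes with every `f(D)`, preserves the order.
-/

open CFC MeasureTheory

lemma exp_half_le_integral_exp_mul (x : ℝ) :
    Real.exp (x / 2) ≤ ∫ t in (0 : ℝ)..1, Real.exp (t * x) := by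
  calc Real.exp (x / 2) = ∫ _ in (0 : ℝ)..1, Real.exp (x / 2) := by simp
    _ ≤ ∫ t in (0 : ℝ)..1, (Real.exp (t * x) + Real.exp ((1 - t) * x)) / 2 := by
        refine intervalIntegral.integral_mono_on zero_le_one intervalIntegrable_const
          (by apply Continuous.intervalIntegrable; fun_prop) fun t _ => ?_
        have := convexOn_exp.2 (Set.mem_univ (t * x)) (Set.mem_univ ((1 - t) * x))
          (by norm_num : (0 : ℝ) ≤ 1 / 2) (by norm_num : (0 : ℝ) ≤ 1 / 2) (by norm_num)
        rw [show x / 2 = 1 / 2 * (t * x) + 1 / 2 * ((1 - t) * x) by ring]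
        simp only [smul_eq_mul] at this
        linarith
    _ = ∫ t in (0 : ℝ)..1, Real.exp (t * x) := by
        rw [intervalIntegral.integral_div, intervalIntegral.integral_add
          (by apply Continuous.intervalIntegrable; fun_prop)
          (by apply Continuous.intervalIntegrable; fun_prop),
          intervalIntegral.integral_comp_sub_left (fun t => Real.exp (t * x))]
        norm_num

lemma integral_exp_mul_le (x : ℝ) :
    ∫ t in (0 : ℝ)..1, Real.exp (t * x) ≤ 1 / 2 * (1 + Real.exp x) := by
  calc ∫ t in (0 : ℝ)..1, Real.exp (t * x)
        ≤ ∫ t in (0 : ℝ)..1, ((1 - t) + t * Real.exp x) := by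
        refine intervalIntegral.integral_mono_on zero_le_one
          (by apply Continuous.intervalIntegrable; fun_prop)
          (by apply Continuous.intervalIntegrable; fun_prop) fun t ⟨ht₀, ht₁⟩ => ?_
        simpa using convexOn_exp.2 (Set.mem_univ 0) (Set.mem_univ x) (sub_nonneg.2 ht₁) ht₀
          (sub_add_cancel 1 t)
    _ = 1 / 2 * (1 + Real.exp x) := by
        rw [intervalIntegral.integral_add (by apply Continuous.intervalIntegrable; fun_prop)
          (by apply Continuous.intervalIntegrable; fun_prop),
          intervalIntegral.integral_comp_sub_left (fun t => t)]
        norm_num [integral_id]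
        ring

section CStarAlgebra

variable {𝒜 : Type*} [CStarAlgebra 𝒜]

lemma IsSelfAdjoint.exp_smul_eq_cfc {d : 𝒜} (hd : IsSelfAdjoint d) (t : ℝ) :
    NormedSpace.exp (t • d) = cfc (fun x => Real.exp (t * x)) d := by
  rw [cfc_comp_const_mul (R := ℝ) (p := IsSelfAdjoint) t Real.exp d,
    CFC.real_exp_eq_normedSpace_exp ((IsSelfAdjoint.all t).smul hd)]

lemma intervalIntegral_cfc_mul {f : ℝ → ℝ → ℝ} (hf : Continuous (Function.uncurry f))
    (d c : 𝒜) {a b : ℝ} (hab : a ≤ b) (hd : IsSelfAdjoint d := by cfc_tac) :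
    ∫ t in a..b, cfc (f t) d * c = cfc (fun x => ∫ t in a..b, f t x) d * c := by
  obtain ⟨C, hC⟩ := (isCompact_Icc.prod (spectrum.isCompact d)).exists_bound_of_continuousOn
    hf.continuousOn
  have hbound : ∀ᵐ t ∂volume.restrict (Set.Ioc a b), ∀ z ∈ spectrum ℝ d, ‖f t z‖ ≤ C :=
    ae_restrict_of_forall_mem measurableSet_Ioc fun t ht z hz =>
      hC (t, z) ⟨Set.Ioc_subset_Icc_self ht, hz⟩
  simp_rw [intervalIntegral.integral_of_le hab]
  rw [integral_mul_const_of_integrable (integrableOn_cfc measurableSet_Ioc f (fun _ => C) d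
    hf.continuousOn hbound (hasFiniteIntegral_const C)), cfc_setIntegral measurableSet_Ioc f
    (fun _ => C) d hf.continuousOn hbound (hasFiniteIntegral_const C)]

lemma IsStrictlyPositive.rpow_eq_exp_smul_log [PartialOrder 𝒜] [StarOrderedRing 𝒜] {a : 𝒜}
    (ha : IsStrictlyPositive a) (t : ℝ) :
    a ^ t = NormedSpace.exp (t • log a) := by
  have hspec : ∀ x ∈ spectrum ℝ a, 0 < x := fun x hx => by grind
  rw [IsSelfAdjoint.log.exp_smul_eq_cfc, log, ← cfc_comp' _ _ a (by fun_prop)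
    (by fun_prop (disch := grind)), rpow_eq_cfc_real ha.nonneg]
  exact cfc_congr fun x hx => by rw [Real.rpow_def_of_pos (hspec x hx), mul_comm]

lemma IsStrictlyPositive.rpow_mul_rpow_one_sub [PartialOrder 𝒜] [StarOrderedRing 𝒜]
    {a b : 𝒜} (ha : IsStrictlyPositive a) (hb : IsStrictlyPositive b) (hab : Commute a b) (t : ℝ) :
    a ^ t * b ^ (1 - t) = cfc (fun x => Real.exp (t * x)) (log a - log b) * b := by
  let _ : NormedAlgebra ℚ 𝒜 := .restrictScalars ℚ ℂ 𝒜
  have hlog : Commute (log a) (log b) := ((hab.cfc_real Real.log).symm.cfc_real Real.log).symm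
  rw [← (IsSelfAdjoint.log.sub IsSelfAdjoint.log).exp_smul_eq_cfc]
  conv_rhs => enter [2]; rw [← exp_log b]
  rw [ha.rpow_eq_exp_smul_log, hb.rpow_eq_exp_smul_log, ← NormedSpace.exp_add_of_commute
    ((hlog.smul_left _).smul_right _), ← NormedSpace.exp_add_of_commute
    ((hlog.sub_left (.refl _)).smul_left _)]
  congr 1
  module

lemma CFC.sqrt_mul_of_commute [PartialOrder 𝒜] [StarOrderedRing 𝒜] {a b : 𝒜} (ha : 0 ≤ a)
    (hb : 0 ≤ b) (hab : Commute a b) : sqrt (a * b) = sqrt a * sqrt b := by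
  have h : Commute (sqrt a) (sqrt b) := ((hab.cfcₙ_nnreal _).symm.cfcₙ_nnreal _).symm
  refine sqrt_unique ?_ (h.mul_nonneg (sqrt_nonneg a) (sqrt_nonneg b))
  rw [h.symm.mul_mul_mul_comm, sqrt_mul_sqrt_self a, sqrt_mul_sqrt_self b]

lemma cfc_mul_le_cfc_mul [PartialOrder 𝒜] [StarOrderedRing 𝒜] {d b : 𝒜} {f g : ℝ → ℝ}
    (hfg : ∀ x ∈ spectrum ℝ d, f x ≤ g x) (hb : 0 ≤ b) (hdb : Commute d b)
    (hf : ContinuousOn f (spectrum ℝ d) := by cfc_cont_tac)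
    (hg : ContinuousOn g (spectrum ℝ d) := by cfc_cont_tac) :
    cfc f d * b ≤ cfc g d * b := by
  have hgf : 0 ≤ cfc g d - cfc f d := sub_nonneg.2 (cfc_mono hfg)
  have := Commute.mul_nonneg hgf hb ((hdb.cfc_real g).sub_left (hdb.cfc_real f))
  rwa [sub_mul, sub_nonneg] at this

end CStarAlgebra

/-- For commuting positive invertible bounded operators `A`, `B`:
`√(AB) ≤ ∫_0^1 A^t B^(1−t) dt ≤ (A + B)/2` in the operator order. -/
theorem stmt_14 {H : Type*} [NormedAddCommGroup H] [InnerProductSpace ℂ H]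
    [CompleteSpace H] (A B : H →L[ℂ] H) (hA : 0 ≤ A) (hB : 0 ≤ B)
    (hAu : IsUnit A) (hBu : IsUnit B) (hAB : A * B = B * A) :
    CFC.sqrt (A * B) ≤ (∫ t in (0 : ℝ)..1, A ^ t * B ^ (1 - t)) ∧
    (∫ t in (0 : ℝ)..1, A ^ t * B ^ (1 - t)) ≤ (1 / 2 : ℝ) • (A + B) := by
  have hpow := (hAu.isStrictlyPositive hA).rpow_mul_rpow_one_sub (hBu.isStrictlyPositive hB) hAB
  set D := log A - log B
  have hDB : Commute D B := (Commute.cfc_real hAB Real.log).sub_left ((Commute.refl B).cfc_real _)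
  have hsqrt : CFC.sqrt (A * B) = cfc (fun x => Real.exp (x / 2)) D * B := by
    rw [sqrt_mul_of_commute hA hB hAB, sqrt_eq_rpow, sqrt_eq_rpow]
    nth_rw 2 [show (1 / 2 : ℝ) = 1 - 1 / 2 by norm_num]
    simp only [hpow, one_div, inv_mul_eq_div]
  have hint : ∫ t in (0 : ℝ)..1, A ^ t * B ^ (1 - t) =
      cfc (fun x => ∫ t in (0 : ℝ)..1, Real.exp (t * x)) D * B := by
    simp_rw [hpow]
    exact intervalIntegral_cfc_mul (by fun_prop) D B zero_le_one
  have hmean : (1 / 2 : ℝ) • (A + B) = cfc (fun x => 1 / 2 * (1 + Real.exp x)) D * B := by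
    have hA_eq : cfc Real.exp D * B = A := by
      simpa [rpow_one A hA, rpow_zero B hB] using (hpow 1).symm
    rw [cfc_const_mul _ _ D, cfc_const_add 1 Real.exp D, map_one, smul_mul_assoc, add_mul,
      one_mul, hA_eq, add_comm]
  have hcont : Continuous fun x : ℝ => ∫ t in (0 : ℝ)..1, Real.exp (t * x) :=
    intervalIntegral.continuous_parametric_intervalIntegral_of_continuous' (by fun_prop) 0 1
  rw [hint, hsqrt, hmean]
  exact ⟨cfc_mul_le_cfc_mul (fun x _ => exp_half_le_integral_exp_mul x) hB hDB
      (hg := hcont.continuousOn),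
    cfc_mul_le_cfc_mul (fun x _ => integral_exp_mul_le x) hB hDB (hf := hcont.continuousOn)⟩
end

section
/- Let n be a positive integer, let A, B, X be n×n complex matrices with X invertible, and let α ∈ ℝ. Then |Tr(A B* |X|)|² ≤ Tr(|A*|² · |X|^(2α)) · Tr(|B*|² · |X|^(2(1−α))), where |T| = (T*T)^(1/2), B* denotes the conjugate transpose, and real powers of the positive definite matrix |X| are defined via the functional calculus. -/
/-!
Write `P = |X|`, which is positive definite because `X` is invertible, and split
`P = P^(1-α) P^α`. Cycling the trace gives `Tr(A B* P) = Tr((P^α A) (P^(1-α) B)*)`, and the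
Cauchy–Schwarz inequality for the Hilbert–Schmidt inner product `⟪M, N⟫ = Tr(M N*)` bounds
its square by `Tr(P^α A A* P^α) · Tr(P^(1-α) B B* P^(1-α))`, which is
`Tr(|A*|² P^(2α)) · Tr(|B*|² P^(2(1-α)))`.
-/

open scoped ComplexOrder Matrix

/-- The absolute value `|X| = (X*X)^(1/2)` of a square complex matrix. -/
noncomputable def matrixAbs {n : ℕ} (X : Matrix (Fin n) (Fin n) ℂ) :
    Matrix (Fin n) (Fin n) ℂ :=
  (Matrix.posSemidef_conjTranspose_mul_self X).1.eigenvectorUnitary.1 *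
    Matrix.diagonal ((↑) ∘ (√·) ∘ (Matrix.posSemidef_conjTranspose_mul_self X).1.eigenvalues) *
    (star (Matrix.posSemidef_conjTranspose_mul_self X).1.eigenvectorUnitary : Matrix (Fin n) (Fin n) ℂ)

/-- The real power `P^r` of a (positive definite) matrix via the functional calculus. -/
noncomputable def matrixRpow {n : ℕ} (P : Matrix (Fin n) (Fin n) ℂ) (r : ℝ) :
    Matrix (Fin n) (Fin n) ℂ :=
  cfc (fun x : ℝ => x ^ r) P

open scoped MatrixOrder

namespace Matrix

theorem IsHermitian.trace_mul_mul_conjTranspose_mul {m n R : Type*} [Fintype m] [Fintype n]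
    [CommRing R] [StarRing R] {Q : Matrix m m R} (hQ : Q.IsHermitian) (A B : Matrix m n R) :
    (Q * A * (Q * B)ᴴ).trace = (A * Bᴴ * (Q * Q)).trace := by
  rw [conjTranspose_mul, hQ.eq, Matrix.mul_assoc, trace_mul_comm]
  simp only [Matrix.mul_assoc]

variable {m 𝕜 : Type*} [Fintype m] [RCLike 𝕜]

theorem norm_trace_mul_conjTranspose_sq_le (M N : Matrix m m 𝕜) :
    (‖(M * Nᴴ).trace‖ : 𝕜) ^ 2 ≤ (M * Mᴴ).trace * (N * Nᴴ).trace := by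
  classical
  let := toMatrixSeminormedAddCommGroup (1 : Matrix m m 𝕜) .one
  let := toMatrixInnerProductSpace (1 : Matrix m m 𝕜) .one
  have hinner (M N : Matrix m m 𝕜) : inner 𝕜 N M = (M * Nᴴ).trace := by
    show (M * 1 * Nᴴ).trace = _
    rw [mul_one]
  rw [← hinner, ← hinner, ← hinner, inner_self_eq_norm_sq_to_K, inner_self_eq_norm_sq_to_K,
    ← mul_pow]
  norm_cast
  gcongr
  rw [mul_comm]
  exact norm_inner_le_norm N M

variable [DecidableEq m]

theorem isHermitian_rpow (P : Matrix m m 𝕜) (r : ℝ) : (P ^ r).IsHermitian :=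
  (nonneg_iff_posSemidef.mp CFC.rpow_nonneg).isHermitian

theorem isUnit_abs_of_isUnit {X : Matrix m m 𝕜} (hX : IsUnit X) : IsUnit (CFC.abs X) := by
  rw [CFC.abs, CFC.isUnit_sqrt_iff _ (star_mul_self_nonneg X)]
  exact hX.star.mul hX

theorem abs_conjTranspose_sq (A : Matrix m m 𝕜) : CFC.abs Aᴴ ^ 2 = A * Aᴴ := by
  rw [CFC.abs_sq, star_eq_conjTranspose, conjTranspose_conjTranspose]

theorem norm_trace_mul_conjTranspose_mul_sq_le {P : Matrix m m 𝕜} (hP₀ : 0 ≤ P)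
    (hP : IsUnit P) (A B : Matrix m m 𝕜) (α : ℝ) :
    (‖(A * Bᴴ * P).trace‖ : 𝕜) ^ 2 ≤
      (A * Aᴴ * P ^ (2 * α)).trace * (B * Bᴴ * P ^ (2 * (1 - α))).trace := by
  have hsplit : P ^ (1 - α) * P ^ α = P := by
    rw [← CFC.rpow_add hP, sub_add_cancel, CFC.rpow_one P]
  calc (‖(A * Bᴴ * P).trace‖ : 𝕜) ^ 2
      = ‖(P ^ α * A * (P ^ (1 - α) * B)ᴴ).trace‖ ^ 2 := by
        rw [conjTranspose_mul, (isHermitian_rpow P _).eq, mul_assoc (P ^ α),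
          trace_mul_comm (P ^ α)]
        simp only [mul_assoc, hsplit]
    _ ≤ (P ^ α * A * (P ^ α * A)ᴴ).trace * (P ^ (1 - α) * B * (P ^ (1 - α) * B)ᴴ).trace :=
        norm_trace_mul_conjTranspose_sq_le _ _
    _ = _ := by
      rw [(isHermitian_rpow P _).trace_mul_mul_conjTranspose_mul,
        (isHermitian_rpow P _).trace_mul_mul_conjTranspose_mul, ← CFC.rpow_add hP,
        ← CFC.rpow_add hP, two_mul, two_mul]

end Matrix

open Matrix

theorem matrixAbs_eq_abs {n : ℕ} (X : Matrix (Fin n) (Fin n) ℂ) : matrixAbs X = CFC.abs X := by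
  rw [CFC.abs, CFC.sqrt_eq_real_sqrt _ (star_mul_self_nonneg X), cfcₙ_eq_cfc,
    star_eq_conjTranspose, (posSemidef_conjTranspose_mul_self X).1.cfc_eq, IsHermitian.cfc,
    Unitary.conjStarAlgAut_apply, matrixAbs]
  rfl

theorem matrixRpow_eq_rpow {n : ℕ} {P : Matrix (Fin n) (Fin n) ℂ} (hP : 0 ≤ P) (r : ℝ) :
    matrixRpow P r = P ^ r :=
  (CFC.rpow_eq_cfc_real hP).symm

theorem stmt_16_general (n : ℕ) (A B X : Matrix (Fin n) (Fin n) ℂ)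
    (hX : IsUnit X) (α : ℝ) :
    (‖(A * Bᴴ * matrixAbs X).trace‖ : ℂ) ^ 2 ≤
      ((matrixAbs Aᴴ) ^ 2 * matrixRpow (matrixAbs X) (2 * α)).trace *
        ((matrixAbs Bᴴ) ^ 2 * matrixRpow (matrixAbs X) (2 * (1 - α))).trace := by
  have hP₀ : 0 ≤ CFC.abs X := CFC.abs_nonneg X
  simp only [matrixAbs_eq_abs, matrixRpow_eq_rpow hP₀, abs_conjTranspose_sq]
  exact norm_trace_mul_conjTranspose_mul_sq_le hP₀ (isUnit_abs_of_isUnit hX) A B α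

/-- `|Tr(A B* |X|)|² ≤ Tr(|A*|² |X|^(2α)) · Tr(|B*|² |X|^(2(1−α)))` for `X` invertible
and any real `α`. -/
theorem stmt_16 (n : ℕ) (hn : 0 < n) (A B X : Matrix (Fin n) (Fin n) ℂ)
    (hX : IsUnit X) (α : ℝ) :
    (‖(A * Bᴴ * matrixAbs X).trace‖ : ℂ) ^ 2 ≤
      ((matrixAbs Aᴴ) ^ 2 * matrixRpow (matrixAbs X) (2 * α)).trace *
        ((matrixAbs Bᴴ) ^ 2 * matrixRpow (matrixAbs X) (2 * (1 - α))).trace :=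
  stmt_16_general n A B X hX α
end

section
/- Let n be a positive integer, let X be an invertible n×n complex matrix, and let α ∈ ℝ. Then |Tr(X)|² ≤ Tr(|X|^(2α)) · Tr(|X|^(2(1−α))), where |X| = (X*X)^(1/2) and real powers of the positive definite matrix |X| are defined via the functional calculus. -/
/-!
Write `P = |X|`, which is positive definite since `X` is invertible, and `P * P = Xᴴ * X`.
Then `X = (X * P^(α-1)) * P^(1-α)`, and the Cauchy–Schwarz inequality for the Frobenius inner
product `⟪A, B⟫ = Tr(B * Aᴴ)` gives `|Tr X|² ≤ Tr(P^(α-1) Xᴴ X P^(α-1)) · Tr(P^(1-α) P^(1-α))`,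
whose two factors are `Tr(P^(2α))` and `Tr(P^(2(1-α)))`.
-/

open scoped ComplexOrder Matrix

namespace Matrix

variable {ι 𝕜 : Type*} [Fintype ι] [RCLike 𝕜]

theorem norm_trace_mul_sq_le (A B : Matrix ι ι 𝕜) :
    (‖(A * B).trace‖ : 𝕜) ^ 2 ≤ (Aᴴ * A).trace * (B * Bᴴ).trace := by
  classical
  -- the Frobenius inner product `⟪x, y⟫ = Tr(y * xᴴ)`
  let _ := toMatrixSeminormedAddCommGroup (1 : Matrix ι ι 𝕜) PosSemidef.one
  let _ := toMatrixInnerProductSpace (1 : Matrix ι ι 𝕜) PosSemidef.one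
  have hcs := inner_mul_inner_self_le (𝕜 := 𝕜) Aᴴ B
  rw [norm_inner_symm B] at hcs
  change ‖(B * 1 * Aᴴᴴ).trace‖ * ‖(B * 1 * Aᴴᴴ).trace‖ ≤
    RCLike.re (Aᴴ * 1 * Aᴴᴴ).trace * RCLike.re (B * 1 * Bᴴ).trace at hcs
  simp only [mul_one, conjTranspose_conjTranspose, trace_mul_comm B A] at hcs
  have hA := (RCLike.nonneg_iff.mp (posSemidef_conjTranspose_mul_self A).trace_nonneg).2
  have hB := (RCLike.nonneg_iff.mp (posSemidef_self_mul_conjTranspose B).trace_nonneg).2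
  rw [← RCLike.re_add_im (Aᴴ * A).trace, ← RCLike.re_add_im (B * Bᴴ).trace, hA, hB]
  simp only [map_zero, zero_mul, add_zero]
  exact_mod_cast (sq _).trans_le hcs

variable [DecidableEq ι] {A : Matrix ι ι 𝕜}

theorem PosSemidef.nonneg_of_mem_spectrum (hA : A.PosSemidef) {x : ℝ} (hx : x ∈ spectrum ℝ A) :
    0 ≤ x := by
  obtain ⟨i, rfl⟩ := hA.1.spectrum_real_eq_range_eigenvalues ▸ hx
  exact hA.eigenvalues_nonneg i

theorem PosDef.pos_of_mem_spectrum (hA : A.PosDef) {x : ℝ} (hx : x ∈ spectrum ℝ A) : 0 < x := by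
  obtain ⟨i, rfl⟩ := hA.1.spectrum_real_eq_range_eigenvalues ▸ hx
  exact hA.eigenvalues_pos i

end Matrix

section

variable {n : ℕ}

theorem matrixAbs_eq_cfc (X : Matrix (Fin n) (Fin n) ℂ) :
    matrixAbs X = cfc Real.sqrt (Xᴴ * X) :=
  ((Matrix.posSemidef_conjTranspose_mul_self X).1.cfc_eq _).symm

theorem matrixAbs_mul_self (X : Matrix (Fin n) (Fin n) ℂ) :
    matrixAbs X * matrixAbs X = Xᴴ * X := by
  have hX := Matrix.posSemidef_conjTranspose_mul_self X
  rw [matrixAbs_eq_cfc, ← cfc_mul Real.sqrt Real.sqrt (Xᴴ * X)]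
  conv_rhs => rw [← cfc_id' ℝ (Xᴴ * X) (ha := hX.1)]
  exact cfc_congr fun x hx => Real.mul_self_sqrt (hX.nonneg_of_mem_spectrum hx)

theorem posSemidef_matrixAbs (X : Matrix (Fin n) (Fin n) ℂ) : (matrixAbs X).PosSemidef := by
  rw [matrixAbs_eq_cfc]
  open scoped MatrixOrder in
  exact Matrix.nonneg_iff_posSemidef.mp (cfc_nonneg fun x _ => Real.sqrt_nonneg x)

theorem posDef_matrixAbs {X : Matrix (Fin n) (Fin n) ℂ} (hX : IsUnit X) :
    (matrixAbs X).PosDef := by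
  refine (posSemidef_matrixAbs X).posDef_iff_isUnit.mpr
    (isUnit_of_mul_isUnit_left (y := matrixAbs X) ?_)
  rw [matrixAbs_mul_self]
  exact hX.star.mul hX

theorem matrixRpow_zero {P : Matrix (Fin n) (Fin n) ℂ} (hP : P.IsHermitian) :
    matrixRpow P 0 = 1 := by
  simp only [matrixRpow, Real.rpow_zero]
  exact cfc_const_one ℝ P

theorem matrixRpow_one {P : Matrix (Fin n) (Fin n) ℂ} (hP : P.IsHermitian) :
    matrixRpow P 1 = P := by
  simp only [matrixRpow, Real.rpow_one]
  exact cfc_id' ℝ P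

theorem matrixRpow_mul_matrixRpow {P : Matrix (Fin n) (Fin n) ℂ} (hP : P.PosDef) (r s : ℝ) :
    matrixRpow P r * matrixRpow P s = matrixRpow P (r + s) := by
  have hcont (t : ℝ) : ContinuousOn (fun x : ℝ => x ^ t) (spectrum ℝ P) := fun x hx =>
    (Real.continuousAt_rpow_const x t (.inl (hP.pos_of_mem_spectrum hx).ne')).continuousWithinAt
  rw [matrixRpow, matrixRpow, matrixRpow, ← cfc_mul _ _ P (hcont r) (hcont s)]
  exact cfc_congr fun x hx => (Real.rpow_add (hP.pos_of_mem_spectrum hx) r s).symm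

theorem conjTranspose_matrixRpow (P : Matrix (Fin n) (Fin n) ℂ) (r : ℝ) :
    (matrixRpow P r)ᴴ = matrixRpow P r :=
  (cfc_predicate _ P : IsSelfAdjoint _)

end

theorem stmt_17_general (n : ℕ) (X : Matrix (Fin n) (Fin n) ℂ)
    (hX : IsUnit X) (α : ℝ) :
    (‖X.trace‖ : ℂ) ^ 2 ≤
      (matrixRpow (matrixAbs X) (2 * α)).trace *
        (matrixRpow (matrixAbs X) (2 * (1 - α))).trace := by
  have hP := posDef_matrixAbs hX
  set P := matrixAbs X
  have hX_eq : X * matrixRpow P (α - 1) * matrixRpow P (1 - α) = X := by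
    rw [mul_assoc, matrixRpow_mul_matrixRpow hP, sub_add_sub_cancel, sub_self,
      matrixRpow_zero hP.1, mul_one]
  have hleft : (X * matrixRpow P (α - 1))ᴴ * (X * matrixRpow P (α - 1)) =
      matrixRpow P (2 * α) := by
    have hXX : Xᴴ * X = matrixRpow P 1 * matrixRpow P 1 := by
      rw [matrixRpow_one hP.1, matrixAbs_mul_self]
    rw [Matrix.conjTranspose_mul, conjTranspose_matrixRpow, mul_assoc, ← mul_assoc Xᴴ, hXX]
    simp only [matrixRpow_mul_matrixRpow hP]
    congr 1; ring
  have hright : matrixRpow P (1 - α) * (matrixRpow P (1 - α))ᴴ = matrixRpow P (2 * (1 - α)) := by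
    rw [conjTranspose_matrixRpow, matrixRpow_mul_matrixRpow hP]
    congr 1; ring
  have hcs := Matrix.norm_trace_mul_sq_le (X * matrixRpow P (α - 1)) (matrixRpow P (1 - α))
  rwa [hX_eq, hleft, hright] at hcs

/-- `|Tr(X)|² ≤ Tr(|X|^(2α)) · Tr(|X|^(2(1−α)))` for `X` invertible and any real `α`. -/
theorem stmt_17 (n : ℕ) (hn : 0 < n) (X : Matrix (Fin n) (Fin n) ℂ)
    (hX : IsUnit X) (α : ℝ) :
    (‖X.trace‖ : ℂ) ^ 2 ≤
      (matrixRpow (matrixAbs X) (2 * α)).trace *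
        (matrixRpow (matrixAbs X) (2 * (1 - α))).trace :=
  stmt_17_general n X hX α
end
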